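/- arXiv:1107.2080 — 2 statements merged into one kernel-verified Lean document; each statement's English description precedes it below -/
import Mathlib

section
/- An elementary cellular automaton F_N is positively expansive if and only if it is both left-permutive and right-permutive. -/
/-- Cantor metric on configurations `ℤ → Bool`. -/
noncomputable def dC (x y : ℤ → Bool) : ℝ :=
  ∑' i : ℤ, if x i = y i then 0 else (1 / 2 : ℝ) ^ i.natAbs

/-- Local rule of the ECA with rule number `N`:
`(a,b,c)` is mapped to the coefficient of `2^(4a+2b+c)` in the binary expansion of `N`. -/
def localRule (N : ℕ) (a b c : Bool) : Bool :=
  N.testBit (4 * a.toNat + 2 * b.toNat + c.toNat)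

/-- The elementary cellular automaton with rule number `N`. -/
def eca (N : ℕ) (x : ℤ → Bool) : ℤ → Bool :=
  fun i => localRule N (x (i - 1)) (x i) (x (i + 1))

/-- `x` belongs to the cylinder `[u]_0`. -/
def inCyl (u : List Bool) (x : ℤ → Bool) : Prop :=
  ∀ j : Fin u.length, x ((j : ℕ) : ℤ) = u.get j

/-- `u` is an `m`-blocking word for `F`. -/
def Blocking (F : (ℤ → Bool) → ℤ → Bool) (m : ℕ) (u : List Bool) : Prop :=
  m ≤ u.length ∧ ∃ q : ℕ, q + m ≤ u.length ∧
    ∀ x y : ℤ → Bool, inCyl u x → inCyl u y → ∀ n : ℕ, ∀ j : ℤ,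
      (q : ℤ) ≤ j → j < (q : ℤ) + (m : ℤ) → F^[n] x j = F^[n] y j

/-- `x` is an equicontinuity point of `F`. -/
def EquicontinuityPoint (F : (ℤ → Bool) → ℤ → Bool) (x : ℤ → Bool) : Prop :=
  ∀ ε : ℝ, 0 < ε → ∃ δ : ℝ, 0 < δ ∧ ∀ y : ℤ → Bool, dC x y < δ →
    ∀ n : ℕ, dC (F^[n] x) (F^[n] y) < ε

/-- `F` is almost equicontinuous: it has at least one equicontinuity point. -/
def AlmostEquicontinuousCA (F : (ℤ → Bool) → ℤ → Bool) : Prop :=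
  ∃ x : ℤ → Bool, EquicontinuityPoint F x

/-- `F` is equicontinuous: every point is an equicontinuity point. -/
def EquicontinuousCA (F : (ℤ → Bool) → ℤ → Bool) : Prop :=
  ∀ x : ℤ → Bool, EquicontinuityPoint F x

/-- `F` is sensitive to initial conditions. -/
def SensitiveCA (F : (ℤ → Bool) → ℤ → Bool) : Prop :=
  ∃ ε : ℝ, 0 < ε ∧ ∀ x : ℤ → Bool, ∀ δ : ℝ, 0 < δ →
    ∃ y : ℤ → Bool, dC x y < δ ∧ ∃ n : ℕ, ε ≤ dC (F^[n] x) (F^[n] y)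

/-- `F` is positively expansive. -/
def PosExpansiveCA (F : (ℤ → Bool) → ℤ → Bool) : Prop :=
  ∃ ε : ℝ, 0 < ε ∧ ∀ x y : ℤ → Bool, x ≠ y →
    ∃ n : ℕ, ε ≤ dC (F^[n] x) (F^[n] y)

/-- The power `σ^q` of the shift map, for `q : ℤ` : `(σ^q x)_i = x_{i+q}`. -/
def shiftBy (q : ℤ) (x : ℤ → Bool) : ℤ → Bool := fun i => x (i + q)

/-- `F` is left-permutive. -/
def LeftPermutive (N : ℕ) : Prop :=
  ∀ b c : Bool, Function.Bijective (fun a => localRule N a b c)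

/-- `F` is right-permutive. -/
def RightPermutive (N : ℕ) : Prop :=
  ∀ a b : Bool, Function.Bijective (fun c => localRule N a b c)

/-- `U` is open in the Cantor metric topology. -/
def IsOpenC (U : Set (ℤ → Bool)) : Prop :=
  ∀ x ∈ U, ∃ δ : ℝ, 0 < δ ∧ ∀ y : ℤ → Bool, dC x y < δ → y ∈ U

/-- `F` is topologically transitive. -/
def TransitiveCA (F : (ℤ → Bool) → ℤ → Bool) : Prop :=
  ∀ U V : Set (ℤ → Bool), IsOpenC U → IsOpenC V → U.Nonempty → V.Nonempty →
    ∃ n : ℕ, 0 < n ∧ ((F^[n]) '' U ∩ V).Nonempty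

/-!
For a bipermutive rule, a configuration is determined by the columns at cells `0` and `1` of its
orbit: each row can be solved for the cell just left of a known window by left permutivity, and
for the cell just right of it by right permutivity. So distinct orbits part at cell `0` or `1`.

Conversely, a map commuting with the shift is not positively expansive once two distinct
configurations have orbits that agree forever on a half-line: shifting the pair moves that
half-line over any window around the origin. For every local rule that is not bipermutive, an
exhaustive check over the 256 rules yields such a pair, of one of two kinds: two configurations
that differ in two adjacent cells and have the same image, or a spatially periodic configuration
of temporal period two whose cells `-2`, `-1` always make the next state of cell `-1` independent
of cell `0`, so that flipping cell `0` never affects the cells to its left. The second kind may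
only appear for the mirrored rule, which is harmless since reflection preserves positive
expansivity.
-/

open Function Filter Topology

lemma summable_half_pow_natAbs : Summable fun i : ℤ => (1 / 2 : ℝ) ^ i.natAbs := by
  apply Summable.of_nat_of_neg <;>
    simpa using summable_geometric_of_lt_one (by norm_num) (by norm_num : (1 / 2 : ℝ) < 1)

lemma summable_dC_summand (x y : ℤ → Bool) :
    Summable fun i => if x i = y i then 0 else (1 / 2 : ℝ) ^ i.natAbs :=
  summable_half_pow_natAbs.of_nonneg_of_le (fun i => by split_ifs <;> positivity)
    (fun i => by split_ifs <;> simp)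

lemma half_pow_natAbs_le_dC {x y : ℤ → Bool} {i : ℤ} (h : x i ≠ y i) :
    (1 / 2 : ℝ) ^ i.natAbs ≤ dC x y := by
  have := (summable_dC_summand x y).le_tsum i fun j _ => by split_ifs <;> positivity
  rwa [if_neg h] at this

lemma exists_forall_dC_lt {ε : ℝ} (hε : 0 < ε) :
    ∃ M : ℕ, ∀ x y : ℤ → Bool, (∀ i : ℤ, i.natAbs ≤ M → x i = y i) → dC x y < ε := by
  have htail : Tendsto (fun M : ℕ => ∑' i : ℤ,
      if i.natAbs ≤ M then (0 : ℝ) else (1 / 2) ^ i.natAbs) atTop (𝓝 0) := by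
    simpa using tendsto_tsum_of_dominated_convergence (g := fun _ => (0 : ℝ))
      summable_half_pow_natAbs
      (fun i => tendsto_const_nhds.congr' <|
        (eventually_ge_atTop i.natAbs).mono fun M hM => (if_pos hM).symm)
      (Eventually.of_forall fun M i => by split_ifs <;> simp)
  obtain ⟨M, hM⟩ := (htail.eventually (gt_mem_nhds hε)).exists
  refine ⟨M, fun x y hxy => lt_of_le_of_lt ?_ hM⟩
  refine Summable.tsum_le_tsum (fun i => ?_) (summable_dC_summand x y)
    (summable_half_pow_natAbs.of_nonneg_of_le (fun i => by split_ifs <;> positivity)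
      (fun i => by split_ifs <;> simp))
  split_ifs <;> first | positivity | simp_all

theorem posExpansiveCA_iff_exists_window (F : (ℤ → Bool) → ℤ → Bool) :
    PosExpansiveCA F ↔
      ∃ M : ℕ, ∀ x y, x ≠ y → ∃ n, ∃ i : ℤ, i.natAbs ≤ M ∧ F^[n] x i ≠ F^[n] y i := by
  constructor
  · rintro ⟨ε, hε, hF⟩
    obtain ⟨M, hM⟩ := exists_forall_dC_lt hε
    refine ⟨M, fun x y hxy => ?_⟩
    obtain ⟨n, hn⟩ := hF x y hxy
    by_contra! h
    exact (hM _ _ (h n)).not_ge hn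
  · rintro ⟨M, hM⟩
    refine ⟨(1 / 2) ^ M, by positivity, fun x y hxy => ?_⟩
    obtain ⟨n, i, hi, hne⟩ := hM x y hxy
    exact ⟨n, (pow_le_pow_of_le_one (by norm_num) (by norm_num) hi).trans
      (half_pow_natAbs_le_dC hne)⟩

lemma shiftBy_injective (q : ℤ) : Injective (shiftBy q) := fun x y e =>
  funext fun i => by simpa [shiftBy] using congrFun e (i - q)

theorem not_posExpansiveCA_of_iterate_eqOn_Iio {F : (ℤ → Bool) → ℤ → Bool}
    (hF : ∀ q, Function.Commute F (shiftBy q)) {x y : ℤ → Bool} (hxy : x ≠ y)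
    (h : ∀ n, ∀ i < 0, F^[n] x i = F^[n] y i) : ¬ PosExpansiveCA F := by
  rw [posExpansiveCA_iff_exists_window]
  rintro ⟨M, hM⟩
  obtain ⟨n, i, hi, hne⟩ := hM _ _ ((shiftBy_injective (-(M + 1))).ne hxy)
  rw [Function.Commute.iterate_left (hF _) n x, Function.Commute.iterate_left (hF _) n y] at hne
  exact hne (h n _ (by omega))

def ecaOf (f : Bool → Bool → Bool → Bool) (x : ℤ → Bool) : ℤ → Bool :=
  fun i => f (x (i - 1)) (x i) (x (i + 1))

section LocalRule

variable {f : Bool → Bool → Bool → Bool}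

lemma commute_ecaOf_shiftBy (f : Bool → Bool → Bool → Bool) (q : ℤ) :
    Function.Commute (ecaOf f) (shiftBy q) := fun x => by
  funext i
  simp only [ecaOf, shiftBy, sub_add_eq_add_sub, add_right_comm i 1 q]

theorem not_posExpansiveCA_ecaOf_of_iterate_eqOn_Iio {x y : ℤ → Bool} (hxy : x ≠ y)
    (h : ∀ n, ∀ i < 0, (ecaOf f)^[n] x i = (ecaOf f)^[n] y i) : ¬ PosExpansiveCA (ecaOf f) :=
  not_posExpansiveCA_of_iterate_eqOn_Iio (commute_ecaOf_shiftBy f) hxy h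

def IsLeftPermutive (f : Bool → Bool → Bool → Bool) : Prop :=
  ∀ b c, Bijective fun a => f a b c

def IsRightPermutive (f : Bool → Bool → Bool → Bool) : Prop :=
  ∀ a b, Bijective (f a b)

instance (f : Bool → Bool → Bool → Bool) : Decidable (IsLeftPermutive f) := by
  unfold IsLeftPermutive; infer_instance

instance (f : Bool → Bool → Bool → Bool) : Decidable (IsRightPermutive f) := by
  unfold IsRightPermutive; infer_instance

lemma IsLeftPermutive.eq_pred (hf : IsLeftPermutive f) {x y : ℤ → Bool} {i : ℤ}
    (h : ecaOf f x i = ecaOf f y i) (h₀ : x i = y i) (h₁ : x (i + 1) = y (i + 1)) :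
    x (i - 1) = y (i - 1) :=
  (hf _ _).1 (by simpa only [ecaOf, h₀, h₁] using h)

lemma IsRightPermutive.eq_succ (hf : IsRightPermutive f) {x y : ℤ → Bool} {i : ℤ}
    (h : ecaOf f x i = ecaOf f y i) (h₀ : x (i - 1) = y (i - 1)) (h₁ : x i = y i) :
    x (i + 1) = y (i + 1) :=
  (hf _ _).1 (by simpa only [ecaOf, h₀, h₁] using h)

theorem eq_of_forall_iterate_eq_zero_one (hL : IsLeftPermutive f) (hR : IsRightPermutive f)
    {x y : ℤ → Bool} (h : ∀ n, (ecaOf f)^[n] x 0 = (ecaOf f)^[n] y 0 ∧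
      (ecaOf f)^[n] x 1 = (ecaOf f)^[n] y 1) : x = y := by
  have hwindow : ∀ k : ℕ, ∀ n, ∀ i : ℤ, -k ≤ i → i ≤ k + 1 →
      (ecaOf f)^[n] x i = (ecaOf f)^[n] y i := by
    intro k
    induction k with
    | zero =>
      intro n i h₀ h₁
      obtain rfl | rfl : i = 0 ∨ i = 1 := by omega
      exacts [(h n).1, (h n).2]
    | succ k ih =>
      intro n i h₀ h₁
      have hstep : ∀ j : ℤ, -k ≤ j → j ≤ k + 1 →
          ecaOf f ((ecaOf f)^[n] x) j = ecaOf f ((ecaOf f)^[n] y) j := fun j hj₀ hj₁ => by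
        simpa only [iterate_succ_apply'] using ih (n + 1) j hj₀ hj₁
      obtain hi | rfl | rfl : (-k ≤ i ∧ i ≤ k + 1) ∨ i = -k - 1 ∨ i = k + 2 := by
        push_cast at h₀ h₁; omega
      · exact ih n i hi.1 hi.2
      · exact hL.eq_pred (hstep (-k) le_rfl (by omega)) (ih n _ le_rfl (by omega))
          (ih n _ (by omega) (by omega))
      · have := hR.eq_succ (hstep (k + 1) (by omega) le_rfl) (ih n _ (by omega) (by omega))
          (ih n _ (by omega) le_rfl)
        rwa [add_assoc, one_add_one_eq_two] at this
  exact funext fun i => hwindow i.natAbs 0 i (by omega) (by omega)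

theorem posExpansiveCA_ecaOf_of_bipermutive (hL : IsLeftPermutive f) (hR : IsRightPermutive f) :
    PosExpansiveCA (ecaOf f) := by
  refine (posExpansiveCA_iff_exists_window _).2 ⟨1, fun x y hxy => ?_⟩
  by_contra! h
  exact hxy <| eq_of_forall_iterate_eq_zero_one hL hR fun n => ⟨h n 0 zero_le_one, h n 1 le_rfl⟩

def mirrorRule (f : Bool → Bool → Bool → Bool) (a b c : Bool) : Bool := f c b a

def reflectCfg (x : ℤ → Bool) : ℤ → Bool := fun i => x (-i)

lemma reflectCfg_injective : Injective reflectCfg := fun x y e =>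
  funext fun i => by simpa [reflectCfg] using congrFun e (-i)

lemma dC_reflectCfg (x y : ℤ → Bool) : dC (reflectCfg x) (reflectCfg y) = dC x y := by
  simpa [dC, reflectCfg] using
    (Equiv.neg ℤ).tsum_eq fun i => if x i = y i then (0 : ℝ) else (1 / 2) ^ i.natAbs

lemma semiconj_reflectCfg_ecaOf_mirrorRule (f : Bool → Bool → Bool → Bool) :
    Semiconj reflectCfg (ecaOf (mirrorRule f)) (ecaOf f) := fun x => by
  funext i
  simp only [reflectCfg, ecaOf, mirrorRule, neg_sub', neg_add']
  ring_nf

theorem PosExpansiveCA.ecaOf_mirrorRule (h : PosExpansiveCA (ecaOf f)) :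
    PosExpansiveCA (ecaOf (mirrorRule f)) := by
  obtain ⟨ε, hε, h⟩ := h
  refine ⟨ε, hε, fun x y hxy => ?_⟩
  obtain ⟨n, hn⟩ := h _ _ (reflectCfg_injective.ne hxy)
  refine ⟨n, ?_⟩
  rwa [← (semiconj_reflectCfg_ecaOf_mirrorRule f).iterate_right n x,
    ← (semiconj_reflectCfg_ecaOf_mirrorRule f).iterate_right n y, dC_reflectCfg] at hn

def IsRightBlocking (f : Bool → Bool → Bool → Bool) (a b : Bool) : Prop :=
  f a b true = f a b false

instance (f : Bool → Bool → Bool → Bool) (a b : Bool) : Decidable (IsRightBlocking f a b) := by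
  unfold IsRightBlocking; infer_instance

lemma IsRightBlocking.apply_eq {a b : Bool} (h : IsRightBlocking f a b) (c c' : Bool) :
    f a b c = f a b c' := by
  cases c <;> cases c' <;> simp [h.symm]

theorem iterate_eqOn_Iio_of_isRightBlocking {x z : ℤ → Bool} (hxz : ∀ i < 0, x i = z i)
    (hz : ∀ n, IsRightBlocking f ((ecaOf f)^[n] z (-2)) ((ecaOf f)^[n] z (-1))) (n : ℕ) :
    ∀ i < 0, (ecaOf f)^[n] x i = (ecaOf f)^[n] z i := by
  induction n with
  | zero => exact hxz
  | succ n ih =>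
    intro i hi
    simp only [iterate_succ_apply', ecaOf]
    rw [ih (i - 1) (by omega), ih i hi]
    obtain hi' | rfl : i + 1 < 0 ∨ i = -1 := by omega
    · rw [ih (i + 1) hi']
    · exact (hz n).apply_eq _ _

def stepZMod {p : ℕ} (f : Bool → Bool → Bool → Bool) (W : ZMod p → Bool) : ZMod p → Bool :=
  fun r => f (W (r - 1)) (W r) (W (r + 1))

def periodicCfg {p : ℕ} (W : ZMod p → Bool) : ℤ → Bool := fun i => W i

lemma ecaOf_periodicCfg {p : ℕ} (W : ZMod p → Bool) :
    ecaOf f (periodicCfg W) = periodicCfg (stepZMod f W) := by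
  funext i
  simp [ecaOf, periodicCfg, stepZMod]

def IsRightBlockingCycle {p : ℕ} (f : Bool → Bool → Bool → Bool) (W : ZMod p → Bool) : Prop :=
  stepZMod f (stepZMod f W) = W ∧ IsRightBlocking f (W (-2)) (W (-1)) ∧
    IsRightBlocking f (stepZMod f W (-2)) (stepZMod f W (-1))

instance {p : ℕ} [NeZero p] (f : Bool → Bool → Bool → Bool) :
    DecidablePred (IsRightBlockingCycle (p := p) f) := fun _ => by
  unfold IsRightBlockingCycle; infer_instance

theorem not_posExpansiveCA_of_isRightBlockingCycle {p : ℕ} {W : ZMod p → Bool}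
    (hW : IsRightBlockingCycle f W) : ¬ PosExpansiveCA (ecaOf f) := by
  obtain ⟨hcycle, h₀, h₁⟩ := hW
  set z := periodicCfg W
  have hper : IsPeriodicPt (ecaOf f) 2 z := by
    show ecaOf f (ecaOf f z) = z
    rw [ecaOf_periodicCfg, ecaOf_periodicCfg, hcycle]
  have hz : ∀ n, IsRightBlocking f ((ecaOf f)^[n] z (-2)) ((ecaOf f)^[n] z (-1)) := by
    intro n
    rw [← hper.iterate_mod_apply]
    rcases Nat.mod_two_eq_zero_or_one n with h | h <;> rw [h]
    · simpa [z, periodicCfg] using h₀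
    · simpa [z, ecaOf_periodicCfg, periodicCfg] using h₁
  refine not_posExpansiveCA_ecaOf_of_iterate_eqOn_Iio (x := update z 0 !(z 0)) (y := z)
    (fun e => by simpa using congrFun e 0) fun n => iterate_eqOn_Iio_of_isRightBlocking
      (fun i hi => update_of_ne hi.ne _ _) hz n

def HasTwoCellMerge (f : Bool → Bool → Bool → Bool) : Prop :=
  ∃ a b c d c' d' e g : Bool, (c, d) ≠ (c', d') ∧ f a b c = f a b c' ∧ f b c d = f b c' d' ∧
    f c d e = f c' d' e ∧ f d e g = f d' e g

instance (f : Bool → Bool → Bool → Bool) : Decidable (HasTwoCellMerge f) := by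
  unfold HasTwoCellMerge; infer_instance

theorem not_posExpansiveCA_of_ecaOf_eq {x y : ℤ → Bool} (hxy : x ≠ y) (h₀ : ∀ i < 0, x i = y i)
    (h : ecaOf f x = ecaOf f y) : ¬ PosExpansiveCA (ecaOf f) :=
  not_posExpansiveCA_ecaOf_of_iterate_eqOn_Iio hxy fun
    | 0 => h₀
    | n + 1 => by simp [iterate_succ_apply, h]

theorem not_posExpansiveCA_of_hasTwoCellMerge (hf : HasTwoCellMerge f) :
    ¬ PosExpansiveCA (ecaOf f) := by
  obtain ⟨a, b, c, d, c', d', e, g, hne, h₁, h₂, h₃, h₄⟩ := hf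
  set x : ℤ → Bool := fun i => [a, b, c, d, e, g].getD (i + 2).toNat false
  refine not_posExpansiveCA_of_ecaOf_eq (x := x) (y := update (update x 0 c') 1 d') ?_ ?_ ?_
  · intro hxy
    have h₀ := congrFun hxy 0
    have h₁ := congrFun hxy 1
    simp [x] at h₀ h₁
    simp_all
  · intro i hi
    rw [update_of_ne (by omega), update_of_ne (by omega)]
  · funext i
    obtain hi | rfl | rfl | rfl | rfl | hi : i < -1 ∨ i = -1 ∨ i = 0 ∨ i = 1 ∨ i = 2 ∨ 2 < i := by
      omega
    all_goals simp only [ecaOf, update_apply]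
    · split_ifs <;> first | omega | rfl
    · simpa [x] using h₁
    · simpa [x] using h₂
    · simpa [x] using h₃
    · simpa [x] using h₄
    · split_ifs <;> first | omega | rfl

end LocalRule

-- Spatial period 6: no smaller period works for both rule 30 and rule 45.
theorem bipermutive_or_hasTwoCellMerge_or_isRightBlockingCycle (f : Bool → Bool → Bool → Bool) :
    IsLeftPermutive f ∧ IsRightPermutive f ∨ HasTwoCellMerge f ∨
      (∃ W : ZMod 6 → Bool, IsRightBlockingCycle f W) ∨
      ∃ W : ZMod 6 → Bool, IsRightBlockingCycle (mirrorRule f) W := by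
  revert f
  decide +kernel

theorem posExpansiveCA_ecaOf_iff (f : Bool → Bool → Bool → Bool) :
    PosExpansiveCA (ecaOf f) ↔ IsLeftPermutive f ∧ IsRightPermutive f := by
  refine ⟨fun hf => ?_, fun ⟨hL, hR⟩ => posExpansiveCA_ecaOf_of_bipermutive hL hR⟩
  rcases bipermutive_or_hasTwoCellMerge_or_isRightBlockingCycle f with
    h | h | ⟨W, hW⟩ | ⟨W, hW⟩
  · exact h
  · exact absurd hf (not_posExpansiveCA_of_hasTwoCellMerge h)
  · exact absurd hf (not_posExpansiveCA_of_isRightBlockingCycle hW)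
  · exact absurd hf.ecaOf_mirrorRule (not_posExpansiveCA_of_isRightBlockingCycle hW)

theorem eca_posexpansive_iff_bipermutive_general (N : ℕ) :
    PosExpansiveCA (eca N) ↔ LeftPermutive N ∧ RightPermutive N :=
  posExpansiveCA_ecaOf_iff (localRule N)

/-- An elementary cellular automaton is positively expansive if and only if it is both
left- and right-permutive. -/
theorem eca_posexpansive_iff_bipermutive (N : ℕ) (hN : N ≤ 255) :
    PosExpansiveCA (eca N) ↔ LeftPermutive N ∧ RightPermutive N :=
  eca_posexpansive_iff_bipermutive_general N
end

section
/- For every rule number N in the set {2, 3, 10, 15, 24, 34, 38, 42, 46, 138, 170}, the elementary cellular automaton F_N is eventually weakly periodic: F_N is not eventually periodic, but every configuration x ∈ X is eventually weakly periodic for F_N. -/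
/-- `F` is eventually periodic: every configuration eventually becomes temporally
periodic. -/
def EventuallyPeriodicCA (F : (ℤ → Bool) → ℤ → Bool) : Prop :=
  ∀ x : ℤ → Bool, ∃ k n : ℕ, 0 < n ∧ F^[k + n] x = F^[k] x

/-- `x` is eventually weakly periodic for `F`: there are `q ∈ ℤ` and `n, p > 0` with
`F^{n+p}(σ^q(x)) = F^n(x)`. -/
def EventuallyWeaklyPeriodicPt (F : (ℤ → Bool) → ℤ → Bool) (x : ℤ → Bool) : Prop :=
  ∃ q : ℤ, ∃ n p : ℕ, 0 < n ∧ 0 < p ∧ F^[n + p] (shiftBy q x) = F^[n] x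

lemma eca_shiftBy (N : ℕ) (q : ℤ) (x : ℤ → Bool) :
    eca N (shiftBy q x) = shiftBy q (eca N x) := by
  funext i
  simp only [eca, shiftBy]
  rw [show i - 1 + q = i + q - 1 from by ring, show i + 1 + q = i + q + 1 from by ring]

lemma iter_shiftBy (N : ℕ) (n : ℕ) (q : ℤ) (x : ℤ → Bool) :
    (eca N)^[n] (shiftBy q x) = shiftBy q ((eca N)^[n] x) := by
  induction n generalizing x with
  | zero => rfl
  | succ n ih =>
    rw [Function.iterate_succ_apply, Function.iterate_succ_apply, eca_shiftBy, ih]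

lemma eca_local (N : ℕ) {x y : ℤ → Bool} (i : ℤ)
    (h : ∀ j, i - 1 ≤ j → j ≤ i + 1 → x j = y j) : eca N x i = eca N y i := by
  simp only [eca]
  rw [h (i-1) (by omega) (by omega), h i (by omega) (by omega), h (i+1) (by omega) (by omega)]

lemma iter_local (N : ℕ) (n : ℕ) : ∀ (x y : ℤ → Bool) (i : ℤ),
    (∀ j, i - n ≤ j → j ≤ i + n → x j = y j) → (eca N)^[n] x i = (eca N)^[n] y i := by
  induction n with
  | zero => intro x y i h; simpa using h i (by omega) (by omega)
  | succ n ih =>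
    intro x y i h
    rw [Function.iterate_succ_apply, Function.iterate_succ_apply]
    apply ih
    intro j hj1 hj2
    apply eca_local
    intro j' h1 h2
    apply h j' (by push_cast at hj1 hj2 ⊢; omega) (by push_cast at hj1 hj2 ⊢; omega)

lemma iter_const (N : ℕ) (k0 : ℕ) (c : Bool) (i : ℤ) :
    (eca N)^[k0] (fun _ => c) i = (eca N)^[k0] (fun _ => c) 0 := by
  have h := iter_shiftBy N k0 i (fun _ => c)
  have hs : shiftBy i (fun _ : ℤ => c) = fun _ => c := rfl
  rw [hs] at h
  have h2 := congrFun h 0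
  simpa [shiftBy] using h2.symm

lemma not_invariant (y : ℤ → Bool) (b : Bool) (t : ℤ) (ht : y t = b) (B : ℕ)
    (hB : ∀ i : ℤ, B < i.natAbs → y i = !b) (m : ℤ) (hm : m ≠ 0)
    (hinv : ∀ i, y (i + m) = y i) : False := by
  have key : ∀ j : ℕ, y (t + j * m) = b := by
    intro j
    induction j with
    | zero => simpa using ht
    | succ j ih =>
      have e : t + ((j : ℕ) + 1 : ℕ) * m = (t + j * m) + m := by push_cast; ring
      rw [e, hinv, ih]
  set j : ℕ := B + t.natAbs + 1 with hj
  have h1 := key j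
  have h3 : ((j : ℤ) * m).natAbs = j * m.natAbs := Int.natAbs_mul _ _
  have h4 : 1 ≤ m.natAbs := by omega
  have h5 : j ≤ ((j : ℤ) * m).natAbs := by
    rw [h3]
    calc j = j * 1 := (Nat.mul_one j).symm
    _ ≤ j * m.natAbs := Nat.mul_le_mul_left j h4
  have h2 : B < (t + (j : ℤ) * m).natAbs := by
    generalize hz : (j : ℤ) * m = z at h5
    omega
  have h6 := hB _ h2
  rw [h1] at h6
  cases b <;> simp at h6

lemma rel_of_rel0 (N k0 p : ℕ) (s : ℤ)
    (rel0 : ∀ w : ℤ → Bool, (eca N)^[k0 + p] w 0 = (eca N)^[k0] w s) :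
    ∀ (x : ℤ → Bool) (i : ℤ), (eca N)^[k0 + p] x i = (eca N)^[k0] x (i + s) := by
  intro x i
  have h := rel0 (shiftBy i x)
  rw [iter_shiftBy, iter_shiftBy] at h
  simp only [shiftBy, zero_add] at h
  rw [h]
  exact congrArg _ (by ring)

lemma farLemma (N k0 : ℕ) (b : Bool) (h0 : (eca N)^[k0] (fun _ : ℤ => false) 0 = !b) :
    ∀ i : ℤ, (k0 : ℕ) < i.natAbs → (eca N)^[k0] (fun j : ℤ => decide (j = 0)) i = !b := by
  intro i hi
  rw [iter_local N k0 _ (fun _ => false) i ?_, iter_const, h0]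
  intro j h1 h2
  simp only [decide_eq_false_iff_not]
  omega

lemma main_of_rel (N : ℕ) (k0 p : ℕ) (s : ℤ) (hk0 : 0 < k0) (hp : 0 < p) (hs : s ≠ 0)
    (rel : ∀ (x : ℤ → Bool) (i : ℤ), (eca N)^[k0 + p] x i = (eca N)^[k0] x (i + s))
    (b : Bool) (t : ℤ)
    (ht : (eca N)^[k0] (fun i : ℤ => decide (i = 0)) t = b)
    (B : ℕ)
    (hB : ∀ i : ℤ, B < i.natAbs → (eca N)^[k0] (fun i : ℤ => decide (i = 0)) i = !b) :
    ¬ EventuallyPeriodicCA (eca N) ∧ ∀ x : ℤ → Bool, EventuallyWeaklyPeriodicPt (eca N) x := by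
  have relIter : ∀ (j : ℕ) (x : ℤ → Bool) (i : ℤ),
      (eca N)^[k0 + j * p] x i = (eca N)^[k0] x (i + j * s) := by
    intro j
    induction j with
    | zero => intro x i; simp
    | succ j ih =>
      intro x i
      rw [show k0 + (j + 1) * p = (k0 + p) + j * p from by ring, Function.iterate_add_apply,
        rel ((eca N)^[j * p] x) i, ← Function.iterate_add_apply, ih x (i + s),
        show i + s + (j : ℤ) * s = i + ((j : ℕ) + 1 : ℕ) * s from by push_cast; ring]
  constructor
  · intro h
    obtain ⟨k, n, hn, hkn⟩ := h (fun i : ℤ => decide (i = 0))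
    set x0 : ℤ → Bool := fun i : ℤ => decide (i = 0) with hx0
    have step : ∀ j : ℕ, k ≤ j → (eca N)^[j + n] x0 = (eca N)^[j] x0 := by
      intro j hj
      obtain ⟨d, rfl⟩ := Nat.exists_eq_add_of_le hj
      rw [show k + d + n = d + (k + n) from by ring, Function.iterate_add_apply, hkn,
        ← Function.iterate_add_apply]
      congr 1
      omega
    have per : ∀ (j m : ℕ), k ≤ j → (eca N)^[j + m * n] x0 = (eca N)^[j] x0 := by
      intro j m hj
      induction m with
      | zero => simp
      | succ m ih =>
        rw [show j + (m + 1) * n = (j + m * n) + n from by ring, step _ (by omega), ih]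
    have e1 : (eca N)^[k0 + k * p + p * n] x0 = (eca N)^[k0 + k * p] x0 := by
      have hk : k ≤ k0 + k * p := by
        have : k ≤ k * p := Nat.le_mul_of_pos_right k hp
        omega
      exact per (k0 + k * p) p hk
    have hinv : ∀ i : ℤ, (eca N)^[k0] x0 (i + (n : ℤ) * s) = (eca N)^[k0] x0 i := by
      intro i
      have l := relIter (k + n) x0 (i - (k : ℤ) * s)
      have r := relIter k x0 (i - (k : ℤ) * s)
      rw [show k0 + (k + n) * p = k0 + k * p + p * n from by ring] at l
      rw [e1, r] at l
      rw [show i - (k : ℤ) * s + ((k : ℕ) + (n : ℕ) : ℕ) * s = i + (n : ℤ) * s from by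
        push_cast; ring] at l
      rw [show i - (k : ℤ) * s + (k : ℕ) * s = i from by ring] at l
      exact l.symm
    exact not_invariant _ b t ht B hB ((n : ℤ) * s)
      (mul_ne_zero (Int.natCast_ne_zero.mpr hn.ne') hs) hinv
  · intro x
    refine ⟨-s, k0, p, hk0, hp, ?_⟩
    funext i
    rw [iter_shiftBy]
    show ((eca N)^[k0 + p] x) (i + -s) = _
    rw [rel x (i + -s), show i + -s + s = i from by ring]

lemma rel0_2 : ∀ w : ℤ → Bool, (eca 2)^[1 + 1] w 0 = (eca 2)^[1] w (1) := by
  intro w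
  show (eca 2 (eca 2 w)) 0 = (eca 2 w) 1
  simp only [eca]
  norm_num
  generalize w (-2 : ℤ) = a0
  generalize w (-1 : ℤ) = a1
  generalize w (0 : ℤ) = a2
  generalize w (1 : ℤ) = a3
  generalize w (2 : ℤ) = a4
  revert a0 a1 a2 a3 a4
  decide

lemma rel0_3 : ∀ w : ℤ → Bool, (eca 3)^[1 + 2] w 0 = (eca 3)^[1] w (-1) := by
  intro w
  show (eca 3 (eca 3 (eca 3 w))) 0 = (eca 3 w) (-1)
  simp only [eca]
  norm_num
  generalize w (-3 : ℤ) = a0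
  generalize w (-2 : ℤ) = a1
  generalize w (-1 : ℤ) = a2
  generalize w (0 : ℤ) = a3
  generalize w (1 : ℤ) = a4
  generalize w (2 : ℤ) = a5
  generalize w (3 : ℤ) = a6
  revert a0 a1 a2 a3 a4 a5 a6
  decide

lemma rel0_10 : ∀ w : ℤ → Bool, (eca 10)^[1 + 1] w 0 = (eca 10)^[1] w (1) := by
  intro w
  show (eca 10 (eca 10 w)) 0 = (eca 10 w) 1
  simp only [eca]
  norm_num
  generalize w (-2 : ℤ) = a0
  generalize w (-1 : ℤ) = a1
  generalize w (0 : ℤ) = a2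
  generalize w (1 : ℤ) = a3
  generalize w (2 : ℤ) = a4
  revert a0 a1 a2 a3 a4
  decide

lemma rel0_15 : ∀ w : ℤ → Bool, (eca 15)^[1 + 2] w 0 = (eca 15)^[1] w (-2) := by
  intro w
  show (eca 15 (eca 15 (eca 15 w))) 0 = (eca 15 w) (-2)
  simp only [eca]
  norm_num
  generalize w (-3 : ℤ) = a0
  generalize w (-2 : ℤ) = a1
  generalize w (-1 : ℤ) = a2
  generalize w (0 : ℤ) = a3
  generalize w (1 : ℤ) = a4
  generalize w (2 : ℤ) = a5
  generalize w (3 : ℤ) = a6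
  revert a0 a1 a2 a3 a4 a5 a6
  decide

lemma rel0_24 : ∀ w : ℤ → Bool, (eca 24)^[2 + 1] w 0 = (eca 24)^[2] w (-1) := by
  intro w
  show (eca 24 (eca 24 (eca 24 w))) 0 = (eca 24 (eca 24 w)) (-1)
  simp only [eca]
  norm_num
  generalize w (-3 : ℤ) = a0
  generalize w (-2 : ℤ) = a1
  generalize w (-1 : ℤ) = a2
  generalize w (0 : ℤ) = a3
  generalize w (1 : ℤ) = a4
  generalize w (2 : ℤ) = a5
  generalize w (3 : ℤ) = a6
  revert a0 a1 a2 a3 a4 a5 a6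
  decide

lemma rel0_34 : ∀ w : ℤ → Bool, (eca 34)^[1 + 1] w 0 = (eca 34)^[1] w (1) := by
  intro w
  show (eca 34 (eca 34 w)) 0 = (eca 34 w) 1
  simp only [eca]
  norm_num
  generalize w (-2 : ℤ) = a0
  generalize w (-1 : ℤ) = a1
  generalize w (0 : ℤ) = a2
  generalize w (1 : ℤ) = a3
  generalize w (2 : ℤ) = a4
  revert a0 a1 a2 a3 a4
  decide

lemma rel0_38 : ∀ w : ℤ → Bool, (eca 38)^[2 + 2] w 0 = (eca 38)^[2] w (2) := by
  intro w
  show (eca 38 (eca 38 (eca 38 (eca 38 w)))) 0 = (eca 38 (eca 38 w)) 2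
  simp only [eca]
  norm_num
  generalize w (-4 : ℤ) = a0
  generalize w (-3 : ℤ) = a1
  generalize w (-2 : ℤ) = a2
  generalize w (-1 : ℤ) = a3
  generalize w (0 : ℤ) = a4
  generalize w (1 : ℤ) = a5
  generalize w (2 : ℤ) = a6
  generalize w (3 : ℤ) = a7
  generalize w (4 : ℤ) = a8
  revert a0 a1 a2 a3 a4 a5 a6 a7 a8
  decide

lemma rel0_42 : ∀ w : ℤ → Bool, (eca 42)^[1 + 1] w 0 = (eca 42)^[1] w (1) := by
  intro w
  show (eca 42 (eca 42 w)) 0 = (eca 42 w) 1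
  simp only [eca]
  norm_num
  generalize w (-2 : ℤ) = a0
  generalize w (-1 : ℤ) = a1
  generalize w (0 : ℤ) = a2
  generalize w (1 : ℤ) = a3
  generalize w (2 : ℤ) = a4
  revert a0 a1 a2 a3 a4
  decide

lemma rel0_46 : ∀ w : ℤ → Bool, (eca 46)^[2 + 1] w 0 = (eca 46)^[2] w (1) := by
  intro w
  show (eca 46 (eca 46 (eca 46 w))) 0 = (eca 46 (eca 46 w)) 1
  simp only [eca]
  norm_num
  generalize w (-3 : ℤ) = a0
  generalize w (-2 : ℤ) = a1
  generalize w (-1 : ℤ) = a2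
  generalize w (0 : ℤ) = a3
  generalize w (1 : ℤ) = a4
  generalize w (2 : ℤ) = a5
  generalize w (3 : ℤ) = a6
  revert a0 a1 a2 a3 a4 a5 a6
  decide

lemma rel0_138 : ∀ w : ℤ → Bool, (eca 138)^[1 + 1] w 0 = (eca 138)^[1] w (1) := by
  intro w
  show (eca 138 (eca 138 w)) 0 = (eca 138 w) 1
  simp only [eca]
  norm_num
  generalize w (-2 : ℤ) = a0
  generalize w (-1 : ℤ) = a1
  generalize w (0 : ℤ) = a2
  generalize w (1 : ℤ) = a3
  generalize w (2 : ℤ) = a4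
  revert a0 a1 a2 a3 a4
  decide

lemma rel0_170 : ∀ w : ℤ → Bool, (eca 170)^[1 + 1] w 0 = (eca 170)^[1] w (1) := by
  intro w
  show (eca 170 (eca 170 w)) 0 = (eca 170 w) 1
  simp only [eca]
  norm_num
  generalize w (-2 : ℤ) = a0
  generalize w (-1 : ℤ) = a1
  generalize w (0 : ℤ) = a2
  generalize w (1 : ℤ) = a3
  generalize w (2 : ℤ) = a4
  revert a0 a1 a2 a3 a4
  decide


/-- The listed ECA rules are eventually weakly periodic: not eventually periodic, but
every configuration is eventually weakly periodic. -/
theorem eca_eventually_weakly_periodic_rules :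
    ∀ N ∈ ({2, 3, 10, 15, 24, 34, 38, 42, 46, 138, 170} : Finset ℕ),
      ¬ EventuallyPeriodicCA (eca N) ∧
        ∀ x : ℤ → Bool, EventuallyWeaklyPeriodicPt (eca N) x := by
  intro N hN
  fin_cases hN
  · exact main_of_rel 2 1 1 (1) (by norm_num) (by norm_num) (by norm_num)
      (rel_of_rel0 2 1 1 (1) rel0_2) true (-1) (by decide) 1 (farLemma 2 1 true (by decide))
  · exact main_of_rel 3 1 2 (-1) (by norm_num) (by norm_num) (by norm_num)
      (rel_of_rel0 3 1 2 (-1) rel0_3) false 0 (by decide) 1 (farLemma 3 1 false (by decide))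
  · exact main_of_rel 10 1 1 (1) (by norm_num) (by norm_num) (by norm_num)
      (rel_of_rel0 10 1 1 (1) rel0_10) true (-1) (by decide) 1 (farLemma 10 1 true (by decide))
  · exact main_of_rel 15 1 2 (-2) (by norm_num) (by norm_num) (by norm_num)
      (rel_of_rel0 15 1 2 (-2) rel0_15) false 1 (by decide) 1 (farLemma 15 1 false (by decide))
  · exact main_of_rel 24 2 1 (-1) (by norm_num) (by norm_num) (by norm_num)
      (rel_of_rel0 24 2 1 (-1) rel0_24) true 2 (by decide) 2 (farLemma 24 2 true (by decide))
  · exact main_of_rel 34 1 1 (1) (by norm_num) (by norm_num) (by norm_num)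
      (rel_of_rel0 34 1 1 (1) rel0_34) true (-1) (by decide) 1 (farLemma 34 1 true (by decide))
  · exact main_of_rel 38 2 2 (2) (by norm_num) (by norm_num) (by norm_num)
      (rel_of_rel0 38 2 2 (2) rel0_38) true (-2) (by decide) 2 (farLemma 38 2 true (by decide))
  · exact main_of_rel 42 1 1 (1) (by norm_num) (by norm_num) (by norm_num)
      (rel_of_rel0 42 1 1 (1) rel0_42) true (-1) (by decide) 1 (farLemma 42 1 true (by decide))
  · exact main_of_rel 46 2 1 (1) (by norm_num) (by norm_num) (by norm_num)
      (rel_of_rel0 46 2 1 (1) rel0_46) true (-1) (by decide) 2 (farLemma 46 2 true (by decide))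
  · exact main_of_rel 138 1 1 (1) (by norm_num) (by norm_num) (by norm_num)
      (rel_of_rel0 138 1 1 (1) rel0_138) true (-1) (by decide) 1 (farLemma 138 1 true (by decide))
  · exact main_of_rel 170 1 1 (1) (by norm_num) (by norm_num) (by norm_num)
      (rel_of_rel0 170 1 1 (1) rel0_170) true (-1) (by decide) 1 (farLemma 170 1 true (by decide))
end
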